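/- Let G be the finite simple graph on 8 vertices whose complement is the disjoint union of a single edge K2 and a 6-cycle C6 (so G has 21 edges). Then G is not 1-apex. -/

import Mathlib

/-!
The complement of `K₂ + C₆` consists of the triangular prism `C₆ᶜ` together with two
non-adjacent vertices joined to all of it. Whichever vertex is deleted, the remaining seven
vertices can be grouped into five cliques of size at most two that are pairwise joined by an
edge, giving a `K₅` minor. The rotations of `C₆` and the swap of the `K₂` make the grouping
uniform in the deleted vertex.
-/

/-- `H` is a minor of `G`: there are pairwise disjoint nonempty connected branch sets
in `G`, one for each vertex of `H`, with an edge of `G` between the branch sets of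
any two vertices adjacent in `H`. -/
def SimpleGraph.IsMinor {W V : Type*} (H : SimpleGraph W) (G : SimpleGraph V) : Prop :=
  ∃ f : W → Set V,
    (∀ w, (f w).Nonempty) ∧
    (∀ w, (G.induce (f w)).Connected) ∧
    (Pairwise fun w₁ w₂ => Disjoint (f w₁) (f w₂)) ∧
    ∀ ⦃w₁ w₂⦄, H.Adj w₁ w₂ → ∃ v₁ ∈ f w₁, ∃ v₂ ∈ f w₂, G.Adj v₁ v₂

/-- A graph is planar iff it has no `K₅` minor and no `K₃,₃` minor (Kuratowski–Wagner). -/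
def SimpleGraph.IsPlanar {V : Type*} (G : SimpleGraph V) : Prop :=
  ¬ (⊤ : SimpleGraph (Fin 5)).IsMinor G ∧
  ¬ (completeBipartiteGraph (Fin 3) (Fin 3)).IsMinor G

/-- A graph is 2-apex if it becomes planar after deleting at most two vertices. -/
def SimpleGraph.TwoApex {V : Type*} (G : SimpleGraph V) : Prop :=
  ∃ s : Set V, s.ncard ≤ 2 ∧ (G.induce sᶜ).IsPlanar

/-- A graph is 1-apex if it becomes planar after deleting at most one vertex. -/
def SimpleGraph.OneApex {V : Type*} (G : SimpleGraph V) : Prop :=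
  ∃ s : Set V, s.ncard ≤ 1 ∧ (G.induce sᶜ).IsPlanar

namespace SimpleGraph

variable {U V W : Type*} {H : SimpleGraph U} {G : SimpleGraph V} {G' : SimpleGraph W}

instance [DecidableRel G.Adj] [DecidableRel G'.Adj] : DecidableRel (G ⊕g G').Adj
  | .inl u, .inl v => inferInstanceAs (Decidable (G.Adj u v))
  | .inr u, .inr v => inferInstanceAs (Decidable (G'.Adj u v))
  | .inl _, .inr _ => isFalse Bool.false_ne_true
  | .inr _, .inl _ => isFalse Bool.false_ne_true

def Iso.compl (e : G ≃g G') : Gᶜ ≃g G'ᶜ where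
  toEquiv := e.toEquiv
  map_rel_iff' := by simp [e.map_adj_iff]

theorem IsMinor.map (φ : G ↪g G') (h : H.IsMinor G) : H.IsMinor G' := by
  obtain ⟨f, hne, hconn, hdisj, hadj⟩ := h
  refine ⟨fun u => φ '' f u, fun u => (hne u).image φ, fun u => ?_,
    fun u₁ u₂ hu => (Set.disjoint_image_iff φ.injective).mpr (hdisj hu), fun u₁ u₂ hu => ?_⟩
  · exact (hconn u).map (induceHom φ.toHom (Set.mapsTo_image φ (f u)))
      (Set.surjective_mapsTo_image_restrict φ (f u))
  · obtain ⟨v₁, hv₁, v₂, hv₂, hv⟩ := hadj hu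
    exact ⟨φ v₁, Set.mem_image_of_mem φ hv₁, φ v₂, Set.mem_image_of_mem φ hv₂, φ.map_adj_iff.mpr hv⟩

theorem IsPlanar.of_embedding (φ : G ↪g G') (h : G'.IsPlanar) : G.IsPlanar :=
  ⟨fun hK => h.1 (hK.map φ), fun hK => h.2 (hK.map φ)⟩

theorem not_oneApex_of_forall_not_isPlanar [Finite V] [Nonempty V]
    (h : ∀ v, ¬ (G.induce {v}ᶜ).IsPlanar) : ¬ G.OneApex := by
  rintro ⟨s, hs, hplanar⟩
  obtain ⟨v, hv⟩ := (Set.ncard_le_one_iff_subset_singleton).mp hs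
  exact h v (hplanar.of_embedding (G.induceHomOfLE (Set.compl_subset_compl.mpr hv)))

theorem isMinor_induce_of_isClique {t : Set V} (f : U → Set V) (hsub : ∀ u, f u ⊆ t)
    (hne : ∀ u, (f u).Nonempty) (hclique : ∀ u, G.IsClique (f u))
    (hdisj : Pairwise fun u₁ u₂ => Disjoint (f u₁) (f u₂))
    (hadj : ∀ ⦃u₁ u₂⦄, H.Adj u₁ u₂ → ∃ v₁ ∈ f u₁, ∃ v₂ ∈ f u₂, G.Adj v₁ v₂) :
    H.IsMinor (G.induce t) := by
  refine ⟨fun u => Subtype.val ⁻¹' f u, fun u => ?_, fun u => ?_,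
    fun u₁ u₂ hu => (hdisj hu).preimage _, fun u₁ u₂ hu => ?_⟩
  · obtain ⟨v, hv⟩ := hne u
    exact ⟨⟨v, hsub u hv⟩, hv⟩
  · have hclique' : ((G.induce t).induce (Subtype.val ⁻¹' f u)) = ⊤ :=
      induce_eq_top.mpr fun x hx y hy hxy => hclique u hx hy (Subtype.val_injective.ne hxy)
    obtain ⟨v, hv⟩ := hne u
    have : Nonempty (Subtype.val ⁻¹' f u : Set t) := ⟨⟨⟨v, hsub u hv⟩, hv⟩⟩
    rw [hclique']
    exact connected_top
  · obtain ⟨v₁, hv₁, v₂, hv₂, hv⟩ := hadj hu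
    exact ⟨⟨v₁, hsub _ hv₁⟩, hv₁, ⟨v₂, hsub _ hv₂⟩, hv₂, hv⟩

end SimpleGraph

open SimpleGraph

abbrev complK₂SumC₆ : SimpleGraph (Fin 2 ⊕ Fin 6) := (⊤ ⊕g cycleGraph 6)ᶜ

def k₅BranchSets : Fin 2 ⊕ Fin 6 → Fin 5 → Finset (Fin 2 ⊕ Fin 6)
  | .inl a => ![{.inl (a + 1)}, {.inr 0, .inr 3}, {.inr 1, .inr 4}, {.inr 2}, {.inr 5}]
  | .inr c => ![{.inl 0, .inr (c + 2)}, {.inl 1, .inr (c + 4)}, {.inr (c + 1)}, {.inr (c + 3)},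
      {.inr (c + 5)}]

theorem k₅_isMinor_complK₂SumC₆_induce_compl_singleton (i : Fin 2 ⊕ Fin 6) :
    (⊤ : SimpleGraph (Fin 5)).IsMinor (complK₂SumC₆.induce {i}ᶜ) := by
  refine isMinor_induce_of_isClique (fun k => k₅BranchSets i k) (fun k => ?_) (fun k => ?_)
    (fun k => ?_) (fun k l hkl => ?_) (fun k l hkl => ?_)
  · have hi : ∀ i k, i ∉ k₅BranchSets i k := by decide
    exact Set.subset_compl_singleton_iff.mpr (hi i k)
  · have hne : ∀ i k, (k₅BranchSets i k).Nonempty := by decide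
    exact Finset.coe_nonempty.mpr (hne i k)
  · have hclique : ∀ i k, complK₂SumC₆.IsClique (k₅BranchSets i k : Set (Fin 2 ⊕ Fin 6)) := by
      decide
    exact hclique i k
  · have hdisj : ∀ i (k l : Fin 5), k ≠ l → Disjoint (k₅BranchSets i k) (k₅BranchSets i l) := by
      decide
    exact Finset.disjoint_coe.mpr (hdisj i k l hkl)
  · have hadj : ∀ i (k l : Fin 5), k ≠ l → ∃ u ∈ k₅BranchSets i k, ∃ v ∈ k₅BranchSets i l,
        complK₂SumC₆.Adj u v := by
      decide
    exact hadj i k l hkl.ne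

theorem stmt19_general {V : Type*} (G : SimpleGraph V)
    (h : Nonempty (Gᶜ ≃g ((⊤ : SimpleGraph (Fin 2)) ⊕g SimpleGraph.cycleGraph 6))) :
    ¬ G.OneApex := by
  obtain ⟨e⟩ : Nonempty (Gᶜᶜ ≃g complK₂SumC₆) := h.map Iso.compl
  have : Finite V := Finite.of_equiv _ e.toEquiv.symm
  have : Nonempty V := ⟨e.symm (.inl 0)⟩
  rw [← compl_compl G]
  refine not_oneApex_of_forall_not_isPlanar fun v hv => ?_
  have hbij : Set.BijOn e {v}ᶜ {e v}ᶜ := (Set.bijOn_singleton.mpr rfl).compl e.bijective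
  exact hv.1 ((k₅_isMinor_complK₂SumC₆_induce_compl_singleton (e v)).map
    (e.induce hbij).symm.toEmbedding)

/-- The graph on 8 vertices whose complement is the disjoint union of an edge `K₂`
and a 6-cycle `C₆` is not 1-apex. -/
theorem stmt19 {V : Type*} [Fintype V] (G : SimpleGraph V)
    (hV : Fintype.card V = 8)
    (h : Nonempty (Gᶜ ≃g ((⊤ : SimpleGraph (Fin 2)) ⊕g SimpleGraph.cycleGraph 6))) :
    ¬ G.OneApex :=
  stmt19_general G h
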